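/- (Embedding extension along the chase.) Let Σ ∪ {σ} be a set of egd's and tgd's over a finite attribute set R, let σ_0, σ_1, … be a chasing sequence of σ over Σ with T_i := pr_1(σ_i) and associated valuations ρ_n, let r be a relation over a superset of R satisfying every member of Σ, and let f be a valuation on Val(T_0) with f(T_0) ⊆ r|_R. Then for every n there is an extension f_n of f to Val(T_0) ∪ … ∪ Val(T_n) such that f_n(T_n) ⊆ r|_R and f_n ∘ ρ_n = f_n. -/
import Mathlib


namespace EmbeddedDependencies

noncomputable section
open Classical

/- Values and attributes coincide; we take them to be natural numbers
   (a countably infinite set, with its total well-founded order `<`). -/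
abbrev Val := ℕ

/-- A tuple over an attribute set `R` is (canonically encoded as) a total function
    `Val → Val`; only its values on `R` matter. -/
abbrev Tuple := Val → Val

/-- A relation is a set of tuples. -/
abbrev Rel := Set Tuple

/-- Canonical restriction of a tuple to the attribute set `R` (default value `0` outside `R`). -/
def restrictT (R : Set Val) (t : Tuple) : Tuple := fun a => if a ∈ R then t a else 0

/-- Restriction `r|_R` of a relation `r` to the attribute set `R`. -/
def restrictR (R : Set Val) (r : Rel) : Rel := (restrictT R) '' r

/-- `Val(T)`: the set of values occurring in the relation `T` over the attribute set `R`. -/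
def valsOf (R : Set Val) (T : Rel) : Set Val := {v | ∃ t ∈ T, ∃ a ∈ R, t a = v}

/-- `f(T) ⊆ r|_R` for a valuation `f : Val → Val`. -/
def Embeds (R : Set Val) (f : Val → Val) (T r : Rel) : Prop :=
  ∀ t ∈ T, restrictT R (f ∘ t) ∈ restrictR R r

/-- Satisfaction of the egd `(T, x = y)` over `R` by the relation `r`:
    every valuation `f` with `f(T) ⊆ r|_R` satisfies `f x = f y`. -/
def egdSat (R : Set Val) (T : Rel) (x y : Val) (r : Rel) : Prop :=
  ∀ f : Val → Val, Embeds R f T r → f x = f y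

/-- Satisfaction of the tgd `(T, T')` over `R` by the relation `r`: every valuation `f`
    (on `Val(T)`) with `f(T) ⊆ r|_R` has an extension `g` to `Val(T')`, agreeing with `f`
    on `Val(T) ∩ Val(T')`, with `g(T') ⊆ r|_R`. -/
def tgdSat (R : Set Val) (T T' : Rel) (r : Rel) : Prop :=
  ∀ f : Val → Val, Embeds R f T r →
    ∃ g : Val → Val, (∀ v ∈ valsOf R T ∩ valsOf R T', g v = f v) ∧ Embeds R g T' r

/-- Satisfaction of the inclusion dependency `A_1 … A_n ⊆ B_1 … B_n` by the relation `r`. -/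
def indSat (A B : List Val) (r : Rel) : Prop :=
  ∀ s ∈ r, ∃ s' ∈ r, A.map s = B.map s'

/-- `A` is a sequence listing the attribute set `R`. -/
def ListsR (A : List Val) (R : Set Val) : Prop := A.Nodup ∧ ∀ a, a ∈ A ↔ a ∈ R

/-- Dependencies: egd's and tgd's (with their attribute set) and ind's. -/
inductive Dep : Type
  | egd (R : Set Val) (T : Rel) (x y : Val)
  | tgd (R : Set Val) (T T' : Rel)
  | ind (A B : List Val)

/-- Satisfaction of a dependency by a relation. -/
def Dep.sat (r : Rel) : Dep → Prop
  | .egd R T x y => egdSat R T x y r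
  | .tgd R T T' => tgdSat R T T' r
  | .ind A B => indSat A B r

/-- The attribute set `Att(σ)` of a dependency. -/
def Dep.att : Dep → Set Val
  | .egd R _ _ _ => R
  | .tgd R _ _ => R
  | .ind A B => {v | v ∈ A ∨ v ∈ B}

def Dep.isEgd : Dep → Prop
  | .egd _ _ _ _ => True
  | _ => False

def Dep.isTgd : Dep → Prop
  | .tgd _ _ _ => True
  | _ => False

/-- `d` is an egd or a tgd. -/
def Dep.isET (d : Dep) : Prop := d.isEgd ∨ d.isTgd

/-- Well-formed egd/tgd over the attribute set `R`: finite tableaux, canonically encoded,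
    and (for an egd) `x, y ∈ Val(T)`. -/
def Dep.wf (R : Set Val) : Dep → Prop
  | .egd R0 T x y => R0 = R ∧ T.Finite ∧ restrictR R T = T ∧
      x ∈ valsOf R T ∧ y ∈ valsOf R T
  | .tgd R0 T T' => R0 = R ∧ T.Finite ∧ T'.Finite ∧
      restrictR R T = T ∧ restrictR R T' = T'
  | .ind _ _ => False

/-- `Σ ⊨ σ`: every relation over a superset of `R` satisfying every member of `Σ`
    satisfies `σ`. -/
def Entails (R : Set Val) (Sg : Set Dep) (s : Dep) : Prop :=
  ∀ S : Set Val, R ⊆ S → ∀ r : Rel, restrictR S r = r →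
    (∀ d ∈ Sg, Dep.sat r d) → Dep.sat r s

/-- Apply a valuation `g` to every tuple of a relation over `R`. -/
def mapRel (R : Set Val) (g : Val → Val) (T : Rel) : Rel :=
  (fun t => restrictT R (g ∘ t)) '' T

/-- First component (tableau) of a dependency. -/
def pr1 : Dep → Rel
  | .egd _ T _ _ => T
  | .tgd _ T _ => T
  | .ind _ _ => ∅

/-- Second component of a tgd. -/
def pr2T : Dep → Rel
  | .tgd _ _ T' => T'
  | _ => ∅

/-- Left value of the equality of an egd. -/
def eqFst : Dep → Val
  | .egd _ _ x _ => x
  | _ => 0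

/-- Right value of the equality of an egd. -/
def eqSnd : Dep → Val
  | .egd _ _ _ y => y
  | _ => 0

/-- The values occurring in a dependency (over ambient attribute set `R`). -/
def depVals (R : Set Val) : Dep → Set Val
  | .egd _ T x y => valsOf R T ∪ {x, y}
  | .tgd _ T T' => valsOf R T ∪ valsOf R T'
  | .ind A B => {v | v ∈ A ∨ v ∈ B}

/-- `g(σ)`: apply a valuation to a dependency. -/
def applyVal (R : Set Val) (g : Val → Val) : Dep → Dep
  | .egd R0 T x y => .egd R0 (mapRel R g T) (g x) (g y)
  | .tgd R0 T T' => .tgd R0 (mapRel R g T) (mapRel R g T')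
  | .ind A B => .ind A B

/-- Replace the first component of a dependency. -/
def withPr1 (d : Dep) (T : Rel) : Dep :=
  match d with
  | .egd R0 _ x y => .egd R0 T x y
  | .tgd R0 _ T' => .tgd R0 T T'
  | .ind A B => .ind A B

/-- The valuation that is the identity everywhere except that it maps the greater of
    `p, q` to the smaller. -/
def mergeVal (p q : Val) : Val → Val := fun v => if v = max p q then min p q else v

/-- `f` witnesses that the egd `(S, x = y)` is applicable to the tableau `T`. -/
def EgdAppF (R : Set Val) (S : Rel) (x y : Val) (T : Rel) (f : Val → Val) : Prop :=
  Embeds R f S T ∧ f x ≠ f y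

/-- `f` witnesses that the tgd `(S, S')` is applicable to the tableau `T`:
    `f(S) ⊆ T` but no extension of `f` to `Val(S')` embeds `S'` into `T`. -/
def TgdAppF (R : Set Val) (S S' T : Rel) (f : Val → Val) : Prop :=
  Embeds R f S T ∧ ¬ ∃ g : Val → Val, (∀ v ∈ valsOf R S, g v = f v) ∧ Embeds R g S' T

/-- The dependency `d` is applicable to the tableau `T`. -/
def Applicable (R : Set Val) (d : Dep) (T : Rel) : Prop :=
  match d with
  | .egd _ S x y => ∃ f, EgdAppF R S x y T f
  | .tgd _ S S' => ∃ f, TgdAppF R S S' T f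
  | .ind _ _ => False

/-- One application of the egd rule of the chase, applying `d = (S, x = y)` via `f`,
    recording the merging valuation `g` and the pair `(f x, f y)`. -/
def EgdStepSpec (R : Set Val) (d σn σn1 : Dep) (g : Val → Val) (p : Val × Val) : Prop :=
  ∃ (S : Rel) (x y : Val) (f : Val → Val),
    d = Dep.egd R S x y ∧ EgdAppF R S x y (pr1 σn) f ∧
    p = (f x, f y) ∧ g = mergeVal (f x) (f y) ∧ σn1 = applyVal R g σn

/-- One application of the tgd rule of the chase at position `n` of the history `hist`:
    all (essentially distinct) applicable valuations are simultaneously given distinct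
    extensions whose new values are fresh and greater than every value occurring in
    `σ_0, …, σ_n`. -/
def TgdStepSpec (R : Set Val) (d : Dep) (hist : ℕ → Dep) (n : ℕ) : Prop :=
  ∃ S S' : Rel, d = Dep.tgd R S S' ∧
    (∃ f, TgdAppF R S S' (pr1 (hist n)) f) ∧
    ∃ ext : (Val → Val) → (Val → Val),
      (∀ f, TgdAppF R S S' (pr1 (hist n)) f → ∀ v ∈ valsOf R S, ext f v = f v) ∧
      (∀ f f', TgdAppF R S S' (pr1 (hist n)) f → TgdAppF R S S' (pr1 (hist n)) f' →
        (∀ v ∈ valsOf R S, f v = f' v) → ∀ v ∈ valsOf R S', ext f v = ext f' v) ∧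
      (∀ f, TgdAppF R S S' (pr1 (hist n)) f → ∀ v ∈ valsOf R S' \ valsOf R S,
        ∀ i ≤ n, ∀ w ∈ depVals R (hist i), w < ext f v) ∧
      (∀ f f', TgdAppF R S S' (pr1 (hist n)) f → TgdAppF R S S' (pr1 (hist n)) f' →
        ∀ v ∈ valsOf R S' \ valsOf R S, ∀ w ∈ valsOf R S' \ valsOf R S,
          ext f v = ext f' w → v = w ∧ ∀ z ∈ valsOf R S, f z = f' z) ∧
      hist (n + 1) = withPr1 (hist n)
        (pr1 (hist n) ∪ {t | ∃ f, TgdAppF R S S' (pr1 (hist n)) f ∧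
          ∃ s' ∈ S', t = restrictT R (ext f ∘ s')})

/-- A chasing sequence of `s0` over `Σ` (over the attribute set `R`): `seq` is the
    sequence `σ_0, σ_1, …`; `used n` records which dependency (if any) is applied at step
    `n` (`none` is allowed only when no dependency is applicable, the sequence then being
    constant from that point on); `gv n` is the merging valuation of an egd step (and `id`
    otherwise); `ep n` is the pair `(f x, f y)` of an egd step. An applied egd is applied
    repeatedly until no longer applicable, and no dependency applicable infinitely often
    is starved. -/
structure ChaseSeq (R : Set Val) (Sg : Set Dep) (s0 : Dep) where
  seq : ℕ → Dep
  used : ℕ → Option Dep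
  gv : ℕ → Val → Val
  ep : ℕ → Val × Val
  init : seq 0 = s0
  stepNone : ∀ n, used n = none →
    (∀ d ∈ Sg, ¬ Applicable R d (pr1 (seq n))) ∧ seq (n + 1) = seq n ∧ gv n = id
  stepSome : ∀ n d, used n = some d → d ∈ Sg ∧
    (EgdStepSpec R d (seq n) (seq (n + 1)) (gv n) (ep n) ∨
      (TgdStepSpec R d seq n ∧ gv n = id))
  egdRepeat : ∀ n d, used n = some d → Dep.isEgd d →
    Applicable R d (pr1 (seq (n + 1))) → used (n + 1) = some d
  fair : ∀ d ∈ Sg, (∀ m, ∃ n, m ≤ n ∧ Applicable R d (pr1 (seq n))) →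
    ∀ m, ∃ n, m ≤ n ∧ used n = some d

/-- The descending valuations `ρ_n` associated with a chasing sequence. -/
def ChaseSeq.rho {R : Set Val} {Sg : Set Dep} {s0 : Dep} (C : ChaseSeq R Sg s0) :
    ℕ → Val → Val
  | 0 => id
  | n + 1 => C.gv n ∘ C.rho n

/-- Eventual value of a sequence of values (defaulting to `0` if it does not stabilize). -/
noncomputable def evVal (g : ℕ → Val) : Val :=
  if h : ∃ m, ∀ n, m ≤ n → g n = g m then g h.choose else 0

/-- `ρ(x) = lim_n ρ_n(x)`. -/
noncomputable def ChaseSeq.rhoLim {R : Set Val} {Sg : Set Dep} {s0 : Dep}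
    (C : ChaseSeq R Sg s0) : Val → Val :=
  fun v => evVal fun n => C.rho n v

/-- `T¹ = {u : ∃m ∀n ≥ m, u ∈ pr_1(σ_n)}`. -/
def chaseLim1 {R : Set Val} {Sg : Set Dep} {s0 : Dep} (C : ChaseSeq R Sg s0) : Rel :=
  {t | ∃ m, ∀ n, m ≤ n → t ∈ pr1 (C.seq n)}

/-- `T² = {u : ∃m ∀n ≥ m, u ∈ pr_2(σ_n)}`. -/
def chaseLim2 {R : Set Val} {Sg : Set Dep} {s0 : Dep} (C : ChaseSeq R Sg s0) : Rel :=
  {t | ∃ m, ∀ n, m ≤ n → t ∈ pr2T (C.seq n)}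

/-- The chase result `chase∞(Σ, σ)`. -/
noncomputable def ChaseSeq.result {R : Set Val} {Sg : Set Dep} {s0 : Dep}
    (C : ChaseSeq R Sg s0) : Dep :=
  match s0 with
  | .egd R0 _ _ _ => .egd R0 (chaseLim1 C)
      (evVal fun n => eqFst (C.seq n)) (evVal fun n => eqSnd (C.seq n))
  | .tgd R0 _ _ => .tgd R0 (chaseLim1 C) (chaseLim2 C)
  | .ind A B => .ind A B

/-- A trivial dependency: an egd `(T, x = x)`, or a tgd `(T, T')` such that some
    valuation on `Val(T')` that is the identity on `Val(T) ∩ Val(T')` embeds `T'` into `T`. -/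
def TrivialDep (R : Set Val) : Dep → Prop
  | .egd _ _ x y => x = y
  | .tgd _ T T' => ∃ f : Val → Val, (∀ v ∈ valsOf R T ∩ valsOf R T', f v = v) ∧
      ∀ t' ∈ T', restrictT R (f ∘ t') ∈ restrictR R T
  | .ind _ _ => False

private lemma restrictT_congr' {R : Set Val} {t u : Tuple} (h : ∀ a ∈ R, t a = u a) :
    restrictT R t = restrictT R u := by
  funext a
  simp only [restrictT]
  split
  · exact h a ‹_›
  · rfl

private lemma embeds_congr' {R : Set Val} {f f' : Val → Val} {S T : Rel}
    (hag : ∀ v ∈ valsOf R S, f v = f' v) (h : Embeds R f S T) : Embeds R f' S T := by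
  intro t ht
  have he : restrictT R (f' ∘ t) = restrictT R (f ∘ t) :=
    restrictT_congr' fun a ha => (hag _ ⟨t, ht, a, ha, rfl⟩).symm
  rw [he]
  exact h t ht

private lemma embeds_comp' {R : Set Val} {f g : Val → Val} {S T r : Rel}
    (h1 : Embeds R f S T) (h2 : Embeds R g T r) : Embeds R (g ∘ f) S r := by
  intro t ht
  obtain ⟨u, hu, hue⟩ := h1 t ht
  have he : restrictT R ((g ∘ f) ∘ t) = restrictT R (g ∘ u) := by
    apply restrictT_congr'
    intro a ha
    have h3 := congrFun hue a
    simp only [restrictT, if_pos ha, Function.comp_apply] at h3 ⊢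
    rw [h3]
  rw [he]
  exact h2 u hu

private lemma embeds_val' {R : Set Val} {f : Val → Val} {S T : Rel} {x : Val}
    (hx : x ∈ valsOf R S) (h : Embeds R f S T) : f x ∈ valsOf R T := by
  obtain ⟨t, ht, a, ha, hta⟩ := hx
  obtain ⟨u, hu, hue⟩ := h t ht
  have h3 := congrFun hue a
  simp only [restrictT, if_pos ha, Function.comp_apply] at h3
  exact ⟨u, hu, a, ha, by rw [h3, hta]⟩

private lemma valsOf_pr1_sub (R : Set Val) (d : Dep) :
    valsOf R (pr1 d) ⊆ depVals R d := by
  cases d with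
  | egd R0 T x y => exact Set.subset_union_left
  | tgd R0 T T' => exact Set.subset_union_left
  | ind A B =>
      rintro v ⟨t, ht, -⟩
      exact absurd ht (Set.notMem_empty t)

private lemma pr1_applyVal' (R : Set Val) (g : Val → Val) (d : Dep) :
    pr1 (applyVal R g d) = mapRel R g (pr1 d) := by
  cases d with
  | egd R0 T x y => rfl
  | tgd R0 T T' => rfl
  | ind A B => simp [pr1, applyVal, mapRel]

private lemma pr1_withPr1' {d : Dep} (hd : ∀ A B, d ≠ Dep.ind A B) (T : Rel) :
    pr1 (withPr1 d T) = T := by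
  cases d with
  | egd R0 T0 x y => rfl
  | tgd R0 T0 T' => rfl
  | ind A B => exact absurd rfl (hd A B)

private lemma seq_not_ind {R : Set Val} {Sg : Set Dep} {s : Dep}
    (C : ChaseSeq R Sg s) (hs : ∀ A B, s ≠ Dep.ind A B) :
    ∀ n A B, C.seq n ≠ Dep.ind A B := by
  intro n
  induction n with
  | zero => rw [C.init]; exact hs
  | succ n ih =>
    intro A B hAB
    cases h : C.used n with
    | none =>
      rw [(C.stepNone n h).2.1] at hAB
      exact ih A B hAB
    | some d =>
      rcases (C.stepSome n d h).2 with ⟨S, x, y, f0, _, _, _, _, hstep⟩ |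
        ⟨⟨S, S', _, _, ext, _, _, _, _, hstep⟩, _⟩
      · rw [hstep] at hAB
        cases hseq : C.seq n with
        | egd R0 T x0 y0 => rw [hseq] at hAB; simp [applyVal] at hAB
        | tgd R0 T T' => rw [hseq] at hAB; simp [applyVal] at hAB
        | ind A' B' => exact ih A' B' hseq
      · rw [hstep] at hAB
        cases hseq : C.seq n with
        | egd R0 T x0 y0 => rw [hseq] at hAB; simp [withPr1] at hAB
        | tgd R0 T T' => rw [hseq] at hAB; simp [withPr1] at hAB
        | ind A' B' => exact ih A' B' hseq

private lemma mergeVal_le (p q v : Val) : mergeVal p q v ≤ v := by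
  unfold mergeVal
  split
  · rename_i hv
    rw [hv]
    exact min_le_max
  · exact le_refl v

private lemma gv_cases {R : Set Val} {Sg : Set Dep} {s : Dep}
    (C : ChaseSeq R Sg s) (hwf : ∀ d ∈ Sg, Dep.wf R d) (n : ℕ) :
    C.gv n = id ∨ ∃ p q, C.gv n = mergeVal p q ∧
      p ∈ valsOf R (pr1 (C.seq n)) ∧ q ∈ valsOf R (pr1 (C.seq n)) := by
  cases h : C.used n with
  | none => exact Or.inl (C.stepNone n h).2.2
  | some d =>
    obtain ⟨hdSg, hspec⟩ := C.stepSome n d h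
    rcases hspec with ⟨S, x, y, f0, hd, happ, _, hgv, _⟩ | ⟨_, hgv⟩
    · have hwd := hwf d hdSg
      rw [hd] at hwd
      obtain ⟨-, -, -, hx, hy⟩ := hwd
      exact Or.inr ⟨f0 x, f0 y, hgv, embeds_val' hx happ.1, embeds_val' hy happ.1⟩
    · exact Or.inl hgv

private lemma gv_le {R : Set Val} {Sg : Set Dep} {s : Dep}
    (C : ChaseSeq R Sg s) (hwf : ∀ d ∈ Sg, Dep.wf R d) (n : ℕ) (v : Val) :
    C.gv n v ≤ v := by
  rcases gv_cases C hwf n with h | ⟨p, q, h, -, -⟩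
  · rw [h]; exact le_refl v
  · rw [h]; exact mergeVal_le p q v

private lemma rho_le {R : Set Val} {Sg : Set Dep} {s : Dep}
    (C : ChaseSeq R Sg s) (hwf : ∀ d ∈ Sg, Dep.wf R d) (n : ℕ) (v : Val) :
    C.rho n v ≤ v := by
  induction n with
  | zero => exact le_refl v
  | succ n ih =>
    calc C.rho (n + 1) v = C.gv n (C.rho n v) := by simp [ChaseSeq.rho]
    _ ≤ C.rho n v := gv_le C hwf n _
    _ ≤ v := ih

private lemma rho_fix {R : Set Val} {Sg : Set Dep} {s : Dep}
    (C : ChaseSeq R Sg s) {v : Val} :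
    ∀ n, (∀ m, m < n → C.gv m v = v) → C.rho n v = v := by
  intro n
  induction n with
  | zero => intro _; rfl
  | succ n ih =>
    intro h
    have h1 : C.rho (n + 1) v = C.gv n (C.rho n v) := by simp [ChaseSeq.rho]
    rw [h1, ih (fun m hm => h m (Nat.lt_succ_of_lt hm)), h n (Nat.lt_succ_self n)]

/-- (Embedding extension along the chase.) If `r ⊨ Σ` and `f` is a
valuation on `Val(T_0)` with `f(T_0) ⊆ r|_R`, then for every `n` there is an extension
`f_n` of `f` to `Val(T_0) ∪ … ∪ Val(T_n)` with `f_n(T_n) ⊆ r|_R` and `f_n ∘ ρ_n = f_n`. -/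
theorem chase_embedding_extension
    (R : Set Val) (hR : R.Finite)
    (Sg : Set Dep) (hwf : ∀ d ∈ Sg, Dep.wf R d)
    (s : Dep) (hs : Dep.wf R s)
    (C : ChaseSeq R Sg s)
    (S' : Set Val) (hS' : R ⊆ S') (r : Rel) (hr : restrictR S' r = r)
    (hsat : ∀ d ∈ Sg, Dep.sat r d)
    (f : Val → Val) (hf : Embeds R f (pr1 s) r) :
    ∀ n : ℕ, ∃ fn : Val → Val,
      (∀ v ∈ valsOf R (pr1 s), fn v = f v) ∧
      Embeds R fn (pr1 (C.seq n)) r ∧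
      ∀ v : Val, (∃ i ≤ n, v ∈ valsOf R (pr1 (C.seq i))) → fn (C.rho n v) = fn v := by
  have hsind : ∀ A B, s ≠ Dep.ind A B := by
    intro A B hAB
    rw [hAB] at hs
    exact hs
  have hnotind := seq_not_ind C hsind
  intro n
  induction n with
  | zero =>
    refine ⟨f, fun v _ => rfl, by rw [C.init]; exact hf, ?_⟩
    intro v _
    rfl
  | succ n ih =>
    obtain ⟨fn, hag, hemb, hrho⟩ := ih
    have hrho1 : ∀ v, C.rho (n + 1) v = C.gv n (C.rho n v) := fun v => by
      simp [ChaseSeq.rho]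
    cases h : C.used n with
    | none =>
      obtain ⟨-, hseq, hgv⟩ := C.stepNone n h
      refine ⟨fn, hag, by rw [hseq]; exact hemb, ?_⟩
      rintro v ⟨i, hi, hvi⟩
      rw [hrho1 v, hgv]
      simp only [id_eq]
      apply hrho
      by_cases hin : i ≤ n
      · exact ⟨i, hin, hvi⟩
      · have hieq : i = n + 1 := by omega
        subst hieq
        rw [hseq] at hvi
        exact ⟨n, le_refl n, hvi⟩
    | some d =>
      obtain ⟨hdSg, hspec⟩ := C.stepSome n d h
      rcases hspec with ⟨S0, x, y, f0, hd, happ, hep, hgv, hseq⟩ |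
        ⟨⟨U, U', hd, hexf, ext, P1, P2, P3, P4, hseq⟩, hgv⟩
      · -- egd step
        have hwd := hwf d hdSg
        rw [hd] at hwd
        obtain ⟨-, -, -, hx, hy⟩ := hwd
        have hembS : Embeds R f0 S0 (pr1 (C.seq n)) := happ.1
        have hxy : fn (f0 x) = fn (f0 y) := by
          have hsd := hsat d hdSg
          rw [hd] at hsd
          exact hsd (fn ∘ f0) (embeds_comp' hembS hemb)
        have hfng : ∀ v, fn (C.gv n v) = fn v := by
          intro v
          rw [hgv]
          unfold mergeVal
          split
          · rename_i hv
            rcases le_total (f0 x) (f0 y) with hle | hle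
            · rw [min_eq_left hle, hv, max_eq_right hle]; exact hxy
            · rw [min_eq_right hle, hv, max_eq_left hle]; exact hxy.symm
          · rfl
        have hpr : pr1 (C.seq (n + 1)) = mapRel R (C.gv n) (pr1 (C.seq n)) := by
          rw [hseq, pr1_applyVal']
        refine ⟨fn, hag, ?_, ?_⟩
        · rw [hpr]
          rintro t ⟨u, hu, rfl⟩
          have he : restrictT R (fn ∘ restrictT R (C.gv n ∘ u)) = restrictT R (fn ∘ u) := by
            apply restrictT_congr'
            intro a ha
            simp only [Function.comp_apply, restrictT, if_pos ha]
            exact hfng (u a)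
          rw [he]
          exact hemb u hu
        · rintro v ⟨i, hi, hvi⟩
          have hkey : v ∈ valsOf R (pr1 (C.seq n)) → fn (C.rho (n + 1) v) = fn v := by
            intro hv
            rw [hrho1 v, hfng]
            exact hrho v ⟨n, le_refl n, hv⟩
          by_cases hin : i ≤ n
          · rw [hrho1 v, hfng]
            exact hrho v ⟨i, hin, hvi⟩
          · have hieq : i = n + 1 := by omega
            subst hieq
            rw [hpr] at hvi
            obtain ⟨t, ⟨u, hu, rfl⟩, a, ha, hta⟩ := hvi
            have hv : v = C.gv n (u a) := by
              rw [← hta]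
              simp [restrictT, ha]
            apply hkey
            rw [hv, hgv]
            unfold mergeVal
            split
            · rcases le_total (f0 x) (f0 y) with hle | hle
              · rw [min_eq_left hle]; exact embeds_val' hx hembS
              · rw [min_eq_right hle]; exact embeds_val' hy hembS
            · exact ⟨u, hu, a, ha, rfl⟩
      · -- tgd step
        have hsd := hsat d hdSg
        rw [hd] at hsd
        have htgd : ∀ u : Val → Val, Embeds R u U r →
            ∃ g : Val → Val, (∀ v ∈ valsOf R U ∩ valsOf R U', g v = u v) ∧
              Embeds R g U' r := hsd
        set rv : (Val → Val) → Val → Val :=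
          fun h0 v => if v ∈ valsOf R U then h0 v else 0 with hrv
        set G : (Val → Val) → Val → Val := fun u =>
          if hu : Embeds R u U r then (htgd u hu).choose else id with hGdef
        have hGspec : ∀ u (hu : Embeds R u U r),
            (∀ v ∈ valsOf R U ∩ valsOf R U', G u v = u v) ∧ Embeds R (G u) U' r := by
          intro u hu
          have hGu : G u = (htgd u hu).choose := by
            simp only [hGdef]
            exact dif_pos hu
          rw [hGu]
          exact (htgd u hu).choose_spec
        have hembrv : ∀ h0, TgdAppF R U U' (pr1 (C.seq n)) h0 →
            Embeds R (fn ∘ rv h0) U r := by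
          intro h0 hApp
          apply embeds_congr' (f := fn ∘ h0)
          · intro v hv
            simp only [hrv, Function.comp_apply, if_pos hv]
          · exact embeds_comp' hApp.1 hemb
        set fn1 : Val → Val := fun v =>
          if hv : ∃ h0 w, TgdAppF R U U' (pr1 (C.seq n)) h0 ∧
              w ∈ valsOf R U' \ valsOf R U ∧ ext h0 w = v
          then G (fn ∘ rv hv.choose) hv.choose_spec.choose
          else fn v with hfn1
        have hsmall : ∀ v, (∃ i ≤ n, ∃ w ∈ depVals R (C.seq i), v ≤ w) → fn1 v = fn v := by
          rintro v ⟨i, hi, w, hw, hvw⟩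
          have hnex : ¬ ∃ h0 w0, TgdAppF R U U' (pr1 (C.seq n)) h0 ∧
              w0 ∈ valsOf R U' \ valsOf R U ∧ ext h0 w0 = v := by
            rintro ⟨h0, w0, hApp0, hw0, hext0⟩
            have hlt := P3 h0 hApp0 w0 hw0 i hi w hw
            rw [hext0] at hlt
            exact absurd hvw (Nat.not_le.mpr hlt)
          simp only [hfn1]
          rw [dif_neg hnex]
        have hnew : ∀ h0 w, TgdAppF R U U' (pr1 (C.seq n)) h0 →
            w ∈ valsOf R U' \ valsOf R U → fn1 (ext h0 w) = G (fn ∘ rv h0) w := by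
          intro h0 w hApp hw
          have hex : ∃ h1 w1, TgdAppF R U U' (pr1 (C.seq n)) h1 ∧
              w1 ∈ valsOf R U' \ valsOf R U ∧ ext h1 w1 = ext h0 w := ⟨h0, w, hApp, hw, rfl⟩
          simp only [hfn1]
          rw [dif_pos hex]
          obtain ⟨hApp1, hw1, hext1⟩ := hex.choose_spec.choose_spec
          obtain ⟨hww, hzz⟩ :=
            P4 hex.choose h0 hApp1 hApp hex.choose_spec.choose hw1 w hw hext1
          have hrveq : rv hex.choose = rv h0 := by
            funext v
            simp only [hrv]
            split
            · exact hzz v ‹_›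
            · rfl
          rw [hrveq, hww]
        have hprn1 : pr1 (C.seq (n + 1)) = pr1 (C.seq n) ∪
            {t | ∃ h0, TgdAppF R U U' (pr1 (C.seq n)) h0 ∧
              ∃ s0 ∈ U', t = restrictT R (ext h0 ∘ s0)} := by
          rw [hseq]
          exact pr1_withPr1' (hnotind n) _
        have hGat : ∀ h0, TgdAppF R U U' (pr1 (C.seq n)) h0 → ∀ s0 ∈ U', ∀ a ∈ R,
            fn1 (ext h0 (s0 a)) = G (fn ∘ rv h0) (s0 a) := by
          intro h0 hApp s0 hs0 a ha
          have hsa' : s0 a ∈ valsOf R U' := ⟨s0, hs0, a, ha, rfl⟩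
          by_cases hsa : s0 a ∈ valsOf R U
          · rw [P1 h0 hApp (s0 a) hsa]
            have h1 : fn1 (h0 (s0 a)) = fn (h0 (s0 a)) := by
              apply hsmall
              exact ⟨n, le_refl n, h0 (s0 a),
                valsOf_pr1_sub R (C.seq n) (embeds_val' hsa hApp.1), le_refl _⟩
            have h2 := (hGspec (fn ∘ rv h0) (hembrv h0 hApp)).1 (s0 a) ⟨hsa, hsa'⟩
            rw [h1, h2]
            simp only [Function.comp_apply, hrv, if_pos hsa]
          · exact hnew h0 (s0 a) hApp ⟨hsa', hsa⟩
        refine ⟨fn1, ?_, ?_, ?_⟩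
        · intro v hv
          have h1 : fn1 v = fn v := by
            apply hsmall
            refine ⟨0, Nat.zero_le n, v, ?_, le_refl v⟩
            apply valsOf_pr1_sub
            rw [C.init]
            exact hv
          rw [h1]
          exact hag v hv
        · rw [hprn1]
          rintro t (ht | ⟨h0, hApp, s0, hs0, rfl⟩)
          · have he : restrictT R (fn1 ∘ t) = restrictT R (fn ∘ t) := by
              apply restrictT_congr'
              intro a ha
              simp only [Function.comp_apply]
              apply hsmall
              exact ⟨n, le_refl n, t a, valsOf_pr1_sub R (C.seq n) ⟨t, ht, a, ha, rfl⟩,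
                le_refl _⟩
            rw [he]
            exact hemb t ht
          · have he : restrictT R (fn1 ∘ restrictT R (ext h0 ∘ s0)) =
                restrictT R (G (fn ∘ rv h0) ∘ s0) := by
              apply restrictT_congr'
              intro a ha
              simp only [Function.comp_apply, restrictT, if_pos ha]
              exact hGat h0 hApp s0 hs0 a ha
            rw [he]
            exact (hGspec (fn ∘ rv h0) (hembrv h0 hApp)).2 s0 hs0
        · rintro v ⟨i, hi, hvi⟩
          rw [hrho1 v, hgv]
          simp only [id_eq]
          have hold : (∃ j ≤ n, v ∈ valsOf R (pr1 (C.seq j))) →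
              fn1 (C.rho n v) = fn1 v := by
            rintro ⟨j, hj, hvj⟩
            have hvd : v ∈ depVals R (C.seq j) := valsOf_pr1_sub R (C.seq j) hvj
            have h1 : fn1 v = fn v := hsmall v ⟨j, hj, v, hvd, le_refl v⟩
            have h2 : fn1 (C.rho n v) = fn (C.rho n v) :=
              hsmall _ ⟨j, hj, v, hvd, rho_le C hwf n v⟩
            rw [h1, h2]
            exact hrho v ⟨j, hj, hvj⟩
          by_cases hin : i ≤ n
          · exact hold ⟨i, hin, hvi⟩
          · have hieq : i = n + 1 := by omega
            subst hieq
            rw [hprn1] at hvi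
            obtain ⟨t, htm, a, ha, hta⟩ := hvi
            rcases htm with ht | ⟨h0, hApp, s0, hs0, rfl⟩
            · exact hold ⟨n, le_refl n, t, ht, a, ha, hta⟩
            · have hv : v = ext h0 (s0 a) := by
                rw [← hta]
                simp [restrictT, ha]
              by_cases hsa : s0 a ∈ valsOf R U
              · apply hold
                refine ⟨n, le_refl n, ?_⟩
                rw [hv, P1 h0 hApp (s0 a) hsa]
                exact embeds_val' hsa hApp.1
              · have hdiff : s0 a ∈ valsOf R U' \ valsOf R U := ⟨⟨s0, hs0, a, ha, rfl⟩, hsa⟩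
                have hfixv : C.rho n v = v := by
                  apply rho_fix C
                  intro m hm
                  rcases gv_cases C hwf m with hid | ⟨p, q, hmpq, hp, hq⟩
                  · rw [hid]; rfl
                  · have hpv : p < v := by
                      rw [hv]
                      exact P3 h0 hApp (s0 a) hdiff m (Nat.le_of_lt hm) p
                        (valsOf_pr1_sub R (C.seq m) hp)
                    have hqv : q < v := by
                      rw [hv]
                      exact P3 h0 hApp (s0 a) hdiff m (Nat.le_of_lt hm) q
                        (valsOf_pr1_sub R (C.seq m) hq)
                    have hmax : max p q < v := max_lt hpv hqv
                    rw [hmpq]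
                    unfold mergeVal
                    rw [if_neg (ne_of_gt hmax)]
                rw [hfixv]

end
end EmbeddedDependencies
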